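/- arXiv:2510.04137 — 4 statements merged into one kernel-verified Lean document; each statement's English description precedes it below -/
import Mathlib

section
/- Let X be a complex Hilbert space, G : ℝ → B(X) a continuously differentiable family of bounded self-adjoint operators, and H : ℝ → B(X) a continuous family of bounded self-adjoint operators. Suppose U : ℝ → B(X) is differentiable and solves ∂_t U(t) = −i H(t) U(t). Then Ũ(t) := e^{−i G(t)} U(t) is differentiable and solves ∂_t Ũ(t) = −i H'(t) Ũ(t), where H'(t) = e^{−i G(t)} H(t) e^{i G(t)} + ∫₀¹ e^{−i s G(t)} (∂_t G)(t) e^{i s G(t)} ds. -/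
/-!
Integrating `d/ds (e^{sB} e^{(1-s)A}) = e^{sB} (B - A) e^{(1-s)A}` over `[0, 1]` gives Duhamel's
formula `e^B - e^A = ∫₀¹ e^{sB} (B - A) e^{(1-s)A} ds`. Applied to `B = X + εY` and divided by `ε`,
it identifies the Fréchet derivative of the (analytic) exponential of a Banach algebra at `X` as
`Y ↦ ∫₀¹ e^{sX} Y e^{(1-s)X} ds = (∫₀¹ e^{sX} Y e^{-sX} ds) e^X`. The chain rule for
`t ↦ e^{-iG(t)}`, the product rule and `e^{iG} e^{-iG} = 1` then give the formula for `∂_t Ũ`.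
-/

open MeasureTheory intervalIntegral Filter Topology

namespace NormedSpace

variable {𝔸 : Type*} [NormedRing 𝔸] [NormedAlgebra ℝ 𝔸] [CompleteSpace 𝔸]

@[fun_prop]
theorem exp_continuous_of_real : Continuous (exp : 𝔸 → 𝔸) :=
  continuous_iff_continuousAt.2 fun x => (exp_analytic (𝕂 := ℝ) x).continuousAt

theorem exp_neg_mul_exp (X : 𝔸) : exp (-X) * exp X = 1 := by
  let : NormedAlgebra ℚ 𝔸 := NormedAlgebra.restrictScalars ℚ ℝ 𝔸
  rw [← exp_add_of_commute (Commute.refl X).neg_left, neg_add_cancel, exp_zero]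

theorem exp_one_sub_smul (X : 𝔸) (s : ℝ) : exp ((1 - s) • X) = exp (-(s • X)) * exp X := by
  let : NormedAlgebra ℚ 𝔸 := NormedAlgebra.restrictScalars ℚ ℝ 𝔸
  rw [← exp_add_of_commute ((Commute.refl X).smul_left s).neg_left, sub_smul, one_smul,
    neg_add_eq_sub]

theorem exp_sub_exp_eq_integral (A B : 𝔸) :
    exp B - exp A = ∫ s in (0:ℝ)..1, exp (s • B) * (B - A) * exp ((1 - s) • A) := by
  have hderiv (s : ℝ) : HasDerivAt (fun u : ℝ => exp (u • B) * exp ((1 - u) • A))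
      (exp (s • B) * (B - A) * exp ((1 - s) • A)) s := by
    have hA : HasDerivAt (fun u : ℝ => exp ((1 - u) • A)) (-(A * exp ((1 - s) • A))) s := by
      simpa [Function.comp_def] using
        (hasDerivAt_exp_smul_const' (𝕂 := ℝ) A (1 - s)).scomp s ((hasDerivAt_id s).const_sub 1)
    refine ((hasDerivAt_exp_smul_const (𝕂 := ℝ) B s).mul hA).congr_deriv ?_
    noncomm_ring
  have hcont : Continuous fun s : ℝ => exp (s • B) * (B - A) * exp ((1 - s) • A) := by fun_prop
  rw [integral_eq_sub_of_hasDerivAt (fun s _ => hderiv s) (hcont.intervalIntegrable 0 1)]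
  simp [exp_zero]

theorem hasDerivAt_exp_add_smul (X B : 𝔸) :
    HasDerivAt (fun ε : ℝ => exp (X + ε • B))
      (∫ s in (0:ℝ)..1, exp (s • X) * B * exp ((1 - s) • X)) 0 := by
  set F : ℝ → 𝔸 := fun ε => ∫ s in (0:ℝ)..1, exp (s • (X + ε • B)) * B * exp ((1 - s) • X)
  have hF : Continuous F := by fun_prop
  have hslope (ε : ℝ) (hε : ε ≠ 0) : slope (fun ε : ℝ => exp (X + ε • B)) 0 ε = F ε := by
    rw [slope_def_module, sub_zero, zero_smul, add_zero, exp_sub_exp_eq_integral,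
      ← intervalIntegral.integral_smul]
    refine integral_congr fun s _ => ?_
    rw [add_sub_cancel_left, mul_smul_comm, smul_mul_assoc, inv_smul_smul₀ hε]
  have hF0 : F 0 = ∫ s in (0:ℝ)..1, exp (s • X) * B * exp ((1 - s) • X) := by
    simp only [F, zero_smul, add_zero]
  rw [hasDerivAt_iff_tendsto_slope, ← hF0]
  exact ((hF.tendsto 0).mono_left nhdsWithin_le_nhds).congr'
    (eventually_nhdsWithin_of_forall fun ε hε => (hslope ε hε).symm)

theorem fderiv_exp_apply (X B : 𝔸) :
    fderiv ℝ exp X B = ∫ s in (0:ℝ)..1, exp (s • X) * B * exp ((1 - s) • X) := by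
  have hline : HasDerivAt (fun ε : ℝ => X + ε • B) B 0 := by
    simpa using ((hasDerivAt_id (0:ℝ)).smul_const B).const_add X
  refine ((exp_analytic (𝕂 := ℝ) X).differentiableAt.hasFDerivAt.comp_hasDerivAt_of_eq 0 hline
    (by simp)).unique (hasDerivAt_exp_add_smul X B)

theorem _root_.HasDerivAt.normedSpace_exp {A : ℝ → 𝔸} {A' : 𝔸} {t : ℝ} (h : HasDerivAt A A' t) :
    HasDerivAt (fun u => exp (A u))
      ((∫ s in (0:ℝ)..1, exp (s • A t) * A' * exp (-(s • A t))) * exp (A t)) t := by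
  have hcont : Continuous fun s : ℝ => exp (s • A t) * A' * exp (-(s • A t)) := by fun_prop
  have hmul := ((ContinuousLinearMap.mul ℝ 𝔸).flip (exp (A t))).intervalIntegral_comp_comm
    (hcont.intervalIntegrable (μ := volume) 0 1)
  simp only [ContinuousLinearMap.flip_apply, ContinuousLinearMap.mul_apply'] at hmul
  have h := (exp_analytic (𝕂 := ℝ) (A t)).differentiableAt.hasFDerivAt.comp_hasDerivAt t h
  simp only [fderiv_exp_apply, exp_one_sub_smul, ← mul_assoc] at h
  rwa [hmul] at h

end NormedSpace

open NormedSpace in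
theorem stmt6_general {X : Type*} [NormedAddCommGroup X] [InnerProductSpace ℂ X] [CompleteSpace X]
    (G : ℝ → (X →L[ℂ] X)) (hG : ContDiff ℝ 1 G)
    (H : ℝ → (X →L[ℂ] X))
    (U : ℝ → (X →L[ℂ] X))
    (hU : ∀ t, HasDerivAt U ((-Complex.I) • (H t ∘L U t)) t) (t : ℝ) :
    HasDerivAt (fun s => NormedSpace.exp ((-Complex.I) • G s) ∘L U s)
      ((-Complex.I) •
        (((NormedSpace.exp ((-Complex.I) • G t) ∘L H t ∘L NormedSpace.exp (Complex.I • G t))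
          + ∫ s in (0:ℝ)..1,
              NormedSpace.exp ((-(s : ℂ) * Complex.I) • G t) ∘L (deriv G t) ∘L
                NormedSpace.exp (((s : ℂ) * Complex.I) • G t))
          ∘L (NormedSpace.exp ((-Complex.I) • G t) ∘L U t))) t := by
  simp only [← ContinuousLinearMap.mul_def] at hU ⊢
  have hGt : HasDerivAt G (deriv G t) t := (hG.differentiable one_ne_zero t).hasDerivAt
  have hE := (hGt.const_smul (-Complex.I)).normedSpace_exp
  simp only [Pi.smul_apply] at hE
  have hrot (s : ℝ) : s • ((-Complex.I) • G t) = (-(s : ℂ) * Complex.I) • G t := by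
    rw [← Complex.coe_smul, smul_smul, neg_mul_comm]
  have hconj (s : ℝ) :
      exp (s • ((-Complex.I) • G t)) * ((-Complex.I) • deriv G t) *
          exp (-(s • ((-Complex.I) • G t))) =
        (-Complex.I) • (exp ((-(s : ℂ) * Complex.I) • G t) * (deriv G t *
          exp (((s : ℂ) * Complex.I) • G t))) := by
    rw [hrot, ← neg_smul, neg_mul, neg_neg, mul_smul_comm, smul_mul_assoc, mul_assoc]
  have hcancel : exp (Complex.I • G t) * (exp ((-Complex.I) • G t) * U t) = U t := by
    have hneg : Complex.I • G t = -((-Complex.I) • G t) := by rw [neg_smul, neg_neg]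
    rw [← mul_assoc, hneg, exp_neg_mul_exp, one_mul]
  refine (hE.mul (hU t)).congr_deriv ?_
  rw [integral_congr fun s _ => hconj s, intervalIntegral.integral_smul]
  simp only [add_mul, smul_add, mul_assoc, hcancel, mul_smul_comm, smul_mul_assoc]
  exact add_comm _ _

/-- Conjugation of a quantum dynamics by a time-dependent unitary
`e^{-iG(t)}`: if `∂_t U = -i H U` then `Ũ(t) = e^{-iG(t)} U(t)` solves `∂_t Ũ = -i H' Ũ` with
`H'(t) = e^{-iG(t)} H(t) e^{iG(t)} + ∫₀¹ e^{-isG(t)} (∂_t G)(t) e^{isG(t)} ds`. -/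
theorem stmt6 {X : Type*} [NormedAddCommGroup X] [InnerProductSpace ℂ X] [CompleteSpace X]
    (G : ℝ → (X →L[ℂ] X)) (hG : ContDiff ℝ 1 G) (hGsa : ∀ t, IsSelfAdjoint (G t))
    (H : ℝ → (X →L[ℂ] X)) (hH : Continuous H) (hHsa : ∀ t, IsSelfAdjoint (H t))
    (U : ℝ → (X →L[ℂ] X))
    (hU : ∀ t, HasDerivAt U ((-Complex.I) • (H t ∘L U t)) t) (t : ℝ) :
    HasDerivAt (fun s => NormedSpace.exp ((-Complex.I) • G s) ∘L U s)
      ((-Complex.I) •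
        (((NormedSpace.exp ((-Complex.I) • G t) ∘L H t ∘L NormedSpace.exp (Complex.I • G t))
          + ∫ s in (0:ℝ)..1,
              NormedSpace.exp ((-(s : ℂ) * Complex.I) • G t) ∘L (deriv G t) ∘L
                NormedSpace.exp (((s : ℂ) * Complex.I) • G t))
          ∘L (NormedSpace.exp ((-Complex.I) • G t) ∘L U t))) t :=
  stmt6_general G hG H U hU t
end

section
/- Let ε > 0, τ = 1 + ε, γ > 0, α > 0 with ν = (α, 1) ∈ DC²(γ, τ), and let k = (k⁽¹⁾, k⁽²⁾) ∈ ℤ²∖{0} with ν·k ≠ 0; set λ = 2/|ν·k| and define ω^± = α λ k⁽¹⁾ − λ k⁽²⁾ ± 2. Let C = min{α/4, 1/(4α)} · (γ/2)^{1/τ}. If λ > (4/(C|ν|))^τ and λ > (8/min{α, 1})^τ · (2/γ), then |ω^+| ≥ (C|ν|/2) λ^{1/τ} and |ω^−| ≥ (C|ν|/2) λ^{1/τ}. -/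
lemma stmt9_aux_min (α : ℝ) (hα : 0 < α) :
    min (α / 4) (1 / (4 * α)) * (α + 1) ≤ 1 / 2 := by
  rcases le_total α 1 with h | h
  · have h1' : min (α / 4) (1 / (4 * α)) ≤ α / 4 := min_le_left _ _
    have h2' : α / 4 * (α + 1) ≤ 1 / 2 := by nlinarith
    nlinarith
  · have h1' : min (α / 4) (1 / (4 * α)) ≤ 1 / (4 * α) := min_le_right _ _
    have hpos : 0 < 4 * α := by linarith
    have h2' : 1 / (4 * α) * (α + 1) ≤ 1 / 2 := by
      rw [div_mul_eq_mul_div, div_le_div_iff₀ hpos (by norm_num)]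
      nlinarith
    nlinarith

lemma stmt9_aux_main (lam m K K₀ R : ℝ) (hm0 : 0 < m) (hm1 : m ≤ 1)
    (hK₀le : K₀ ≤ K) (hK₀0 : 0 < K₀) (hlam16 : 16 < m * lam)
    (hK₀8 : 8 < m * K₀) (hRHS : R ≤ K₀ / 4) : R ≤ lam * (m * K) - 2 := by
  have hK₀big : 8 < K₀ := by nlinarith
  have h16K : 16 * K₀ ≤ lam * (m * K) := by nlinarith
  nlinarith

lemma stmt9_aux_A (lam α m x y as : ℝ) (hlam0 : 0 < lam) (hmα : m ≤ α) (hm1 : m ≤ 1)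
    (hx0 : 0 ≤ x) (hy0 : 0 ≤ y) (htri : y ≤ as + α * x) (hlams : lam * as = 2) :
    lam * (m * (x + y)) - 2 ≤ 2 * (lam * (α * x)) := by
  have hmK : m * (x + y) ≤ α * x + y := by nlinarith
  have h1' : lam * (m * (x + y)) ≤ lam * (α * x + y) :=
    mul_le_mul_of_nonneg_left hmK hlam0.le
  have h2' : lam * y ≤ lam * (as + α * x) :=
    mul_le_mul_of_nonneg_left htri hlam0.le
  nlinarith

lemma stmt9_aux_B (lam α m x y as : ℝ) (hlam0 : 0 < lam) (hmα : m ≤ α) (hm1 : m ≤ 1)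
    (hx0 : 0 ≤ x) (hy0 : 0 ≤ y) (htri : α * x ≤ as + y) (hlams : lam * as = 2) :
    lam * (m * (x + y)) - 2 ≤ 2 * (lam * y) := by
  have hmK : m * (x + y) ≤ α * x + y := by nlinarith
  have h1' : lam * (m * (x + y)) ≤ lam * (α * x + y) :=
    mul_le_mul_of_nonneg_left hmK hlam0.le
  have h2' : lam * (α * x) ≤ lam * (as + y) :=
    mul_le_mul_of_nonneg_left htri hlam0.le
  nlinarith

/-- Lower bound for the non-resonant frequencies
`ω^± = αλk⁽¹⁾ - λk⁽²⁾ ± 2`: under the Diophantine condition on `ν = (α,1)` and with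
`λ = 2/|ν·k|` large enough, `|ω^±| ≥ (C|ν|/2) λ^{1/τ}`, `τ = 1+ε`. -/
theorem stmt9 (ε γ α : ℝ) (hε : 0 < ε) (hγ : 0 < γ) (hα : 0 < α)
    (hdio : ∀ ℓ : ℤ × ℤ, ℓ ≠ 0 →
      γ / ((|ℓ.1| : ℝ) + (|ℓ.2| : ℝ)) ^ (1 + ε) ≤ |α * (ℓ.1 : ℝ) + (ℓ.2 : ℝ)|)
    (k : ℤ × ℤ) (hk0 : k ≠ 0) (hkres : α * (k.1 : ℝ) + (k.2 : ℝ) ≠ 0)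
    (lam C : ℝ)
    (hlam : lam = 2 / |α * (k.1 : ℝ) + (k.2 : ℝ)|)
    (hC : C = min (α / 4) (1 / (4 * α)) * (γ / 2) ^ (1 / (1 + ε)))
    (h1 : (4 / (C * (α + 1))) ^ (1 + ε) < lam)
    (h2 : (8 / min α 1) ^ (1 + ε) * (2 / γ) < lam) :
    C * (α + 1) / 2 * lam ^ (1 / (1 + ε))
        ≤ |α * lam * (k.1 : ℝ) - lam * (k.2 : ℝ) + 2| ∧
    C * (α + 1) / 2 * lam ^ (1 / (1 + ε))
        ≤ |α * lam * (k.1 : ℝ) - lam * (k.2 : ℝ) - 2| := by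
  have hτ1 : (1:ℝ) ≤ 1 + ε := by linarith
  have hτ0 : (0:ℝ) < 1 + ε := by linarith
  set s : ℝ := α * (k.1 : ℝ) + (k.2 : ℝ) with hs
  have habs : 0 < |s| := abs_pos.mpr hkres
  have hlam0 : 0 < lam := by rw [hlam]; positivity
  have hlams : lam * |s| = 2 := by rw [hlam]; field_simp
  -- γ ≤ 1
  have hγ1 : γ ≤ 1 := by
    have h := hdio (0, 1) (by decide)
    simpa [Real.one_rpow] using h
  set m : ℝ := min α 1 with hm
  have hm0 : 0 < m := lt_min hα one_pos
  have hm1 : m ≤ 1 := min_le_right _ _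
  have hmα : m ≤ α := min_le_left _ _
  set x : ℝ := |(k.1 : ℝ)| with hx
  set y : ℝ := |(k.2 : ℝ)| with hy
  have hx0 : 0 ≤ x := abs_nonneg _
  have hy0 : 0 ≤ y := abs_nonneg _
  set K : ℝ := x + y with hK
  have hK1 : (1:ℝ) ≤ K := by
    have hk' : k.1 ≠ 0 ∨ k.2 ≠ 0 := by
      by_contra h
      push_neg at h
      exact hk0 (Prod.ext h.1 h.2)
    rcases hk' with h | h
    · have : (1:ℤ) ≤ |k.1| := Int.one_le_abs h
      have : (1:ℝ) ≤ x := by rw [hx, ← Int.cast_abs]; exact_mod_cast this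
      linarith
    · have : (1:ℤ) ≤ |k.2| := Int.one_le_abs h
      have : (1:ℝ) ≤ y := by rw [hy, ← Int.cast_abs]; exact_mod_cast this
      linarith
  have hK0 : 0 < K := by linarith
  -- Diophantine lower bound on K
  have hdk : γ / K ^ (1 + ε) ≤ |s| := by
    rw [hK, hx, hy]
    exact hdio k hk0
  have hKpow0 : 0 < K ^ (1 + ε) := Real.rpow_pos_of_pos hK0 _
  have hKτ : γ * lam / 2 ≤ K ^ (1 + ε) := by
    have h' : γ ≤ |s| * K ^ (1 + ε) := by
      rw [div_le_iff₀ hKpow0] at hdk; linarith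
    have h'' : lam * γ ≤ lam * (|s| * K ^ (1 + ε)) :=
      mul_le_mul_of_nonneg_left h' hlam0.le
    rw [← mul_assoc, hlams] at h''
    linarith
  have hKge : (γ * lam / 2) ^ (1 / (1 + ε)) ≤ K := by
    calc (γ * lam / 2) ^ (1 / (1 + ε))
        ≤ (K ^ (1 + ε)) ^ (1 / (1 + ε)) :=
          Real.rpow_le_rpow (by positivity) hKτ (by positivity)
      _ = K := by
          rw [← Real.rpow_mul hK0.le, mul_one_div, div_self (ne_of_gt hτ0),
            Real.rpow_one]
  set K₀ : ℝ := (γ / 2) ^ (1 / (1 + ε)) * lam ^ (1 / (1 + ε)) with hK₀def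
  have hK₀eq : (γ * lam / 2) ^ (1 / (1 + ε)) = K₀ := by
    rw [hK₀def, ← Real.mul_rpow (by positivity) hlam0.le]
    ring_nf
  have hK₀le : K₀ ≤ K := hK₀eq ▸ hKge
  have hK₀0 : 0 < K₀ := by rw [hK₀def]; positivity
  -- from h2: m * lam > 16 and m * K₀ > 8
  have h8m : (1:ℝ) ≤ 8 / m := by
    rw [le_div_iff₀ hm0]; linarith
  have hlam16 : 16 < m * lam := by
    have hp : 8 / m ≤ (8 / m) ^ (1 + ε) := by
      calc 8 / m = (8 / m) ^ (1:ℝ) := (Real.rpow_one _).symm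
        _ ≤ (8 / m) ^ (1 + ε) := Real.rpow_le_rpow_of_exponent_le h8m hτ1
    have hg : (2:ℝ) ≤ 2 / γ := by
      rw [le_div_iff₀ hγ]; linarith
    have : 8 / m * 2 ≤ (8 / m) ^ (1 + ε) * (2 / γ) := by
      apply mul_le_mul hp hg (by norm_num) (by positivity)
    have h16 : 16 / m < lam := by
      calc 16 / m = 8 / m * 2 := by ring
        _ ≤ (8 / m) ^ (1 + ε) * (2 / γ) := this
        _ < lam := h2
    rw [div_lt_iff₀ hm0] at h16
    linarith [h16]
  have hK₀8 : 8 < m * K₀ := by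
    have hlt : ((8 / m) ^ (1 + ε) * (2 / γ)) ^ (1 / (1 + ε)) < lam ^ (1 / (1 + ε)) :=
      Real.rpow_lt_rpow (by positivity) h2 (by positivity)
    have heq : ((8 / m) ^ (1 + ε) * (2 / γ)) ^ (1 / (1 + ε))
        = (8 / m) * (2 / γ) ^ (1 / (1 + ε)) := by
      rw [Real.mul_rpow (by positivity) (by positivity),
        ← Real.rpow_mul (by positivity), mul_one_div, div_self (ne_of_gt hτ0),
        Real.rpow_one]
    rw [heq] at hlt
    have hmul : m * ((γ / 2) ^ (1 / (1 + ε)) * ((8 / m) * (2 / γ) ^ (1 / (1 + ε))))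
        < m * ((γ / 2) ^ (1 / (1 + ε)) * lam ^ (1 / (1 + ε))) := by
      apply mul_lt_mul_of_pos_left _ hm0
      apply mul_lt_mul_of_pos_left hlt (by positivity)
    have hone : (γ / 2) ^ (1 / (1 + ε)) * (2 / γ) ^ (1 / (1 + ε)) = 1 := by
      rw [← Real.mul_rpow (by positivity) (by positivity)]
      rw [div_mul_div_comm]
      rw [show γ * 2 / (2 * γ) = 1 by rw [mul_comm γ 2]; exact div_self (by positivity)]
      exact Real.one_rpow _
    have hlhs : m * ((γ / 2) ^ (1 / (1 + ε)) * ((8 / m) * (2 / γ) ^ (1 / (1 + ε)))) = 8 := by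
      calc m * ((γ / 2) ^ (1 / (1 + ε)) * ((8 / m) * (2 / γ) ^ (1 / (1 + ε))))
          = 8 * ((γ / 2) ^ (1 / (1 + ε)) * (2 / γ) ^ (1 / (1 + ε))) * (m / m) := by ring
        _ = 8 := by rw [hone, div_self (ne_of_gt hm0)]; norm_num
    rw [hlhs] at hmul
    rw [hK₀def]
    linarith [hmul]
  -- RHS bound : C*(α+1)/2 * lam^{1/τ} ≤ K₀ / 4
  have hCbound : C * (α + 1) / 2 ≤ (γ / 2) ^ (1 / (1 + ε)) / 4 := by
    have hmin : min (α / 4) (1 / (4 * α)) * (α + 1) ≤ 1 / 2 := stmt9_aux_min α hα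
    have hpow0 : (0:ℝ) ≤ (γ / 2) ^ (1 / (1 + ε)) := by positivity
    rw [hC]
    calc min (α / 4) (1 / (4 * α)) * (γ / 2) ^ (1 / (1 + ε)) * (α + 1) / 2
        = (min (α / 4) (1 / (4 * α)) * (α + 1)) * ((γ / 2) ^ (1 / (1 + ε)) / 2) := by ring
      _ ≤ (1 / 2) * ((γ / 2) ^ (1 / (1 + ε)) / 2) := by
          apply mul_le_mul_of_nonneg_right hmin (by positivity)
      _ = (γ / 2) ^ (1 / (1 + ε)) / 4 := by ring
  have hRHS : C * (α + 1) / 2 * lam ^ (1 / (1 + ε)) ≤ K₀ / 4 := by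
    have hlp : (0:ℝ) ≤ lam ^ (1 / (1 + ε)) := by positivity
    calc C * (α + 1) / 2 * lam ^ (1 / (1 + ε))
        ≤ (γ / 2) ^ (1 / (1 + ε)) / 4 * lam ^ (1 / (1 + ε)) :=
          mul_le_mul_of_nonneg_right hCbound hlp
      _ = K₀ / 4 := by rw [hK₀def]; ring
  -- main inequality: RHS ≤ lam * (m * K) - 2
  have hmain : C * (α + 1) / 2 * lam ^ (1 / (1 + ε)) ≤ lam * (m * K) - 2 :=
    stmt9_aux_main lam m K K₀ _ hm0 hm1 hK₀le hK₀0 hlam16 hK₀8 hRHS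
  -- triangle inequalities
  have htriA : y ≤ |s| + α * x := by
    have : (k.2 : ℝ) = s - α * (k.1 : ℝ) := by rw [hs]; ring
    calc y = |s - α * (k.1 : ℝ)| := by rw [hy, this]
      _ ≤ |s| + |α * (k.1 : ℝ)| := abs_sub _ _
      _ = |s| + α * x := by rw [abs_mul, abs_of_pos hα, hx]
  have htriB : α * x ≤ |s| + y := by
    have : α * (k.1 : ℝ) = s - (k.2 : ℝ) := by rw [hs]; ring
    calc α * x = |α * (k.1 : ℝ)| := by rw [abs_mul, abs_of_pos hα, hx]
      _ = |s - (k.2 : ℝ)| := by rw [this]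
      _ ≤ |s| + |(k.2 : ℝ)| := abs_sub _ _
      _ = |s| + y := by rw [hy]
  -- bounds on the two candidate values
  have hA : lam * (m * K) - 2 ≤ 2 * (lam * (α * x)) := by
    rw [hK]
    exact stmt9_aux_A lam α m x y |s| hlam0 hmα hm1 hx0 hy0 htriA hlams
  have hB : lam * (m * K) - 2 ≤ 2 * (lam * y) := by
    rw [hK]
    exact stmt9_aux_B lam α m x y |s| hlam0 hmα hm1 hx0 hy0 htriB hlams
  have habsA : |2 * (lam * (α * (k.1 : ℝ)))| = 2 * (lam * (α * x)) := by
    rw [abs_mul, abs_mul, abs_mul, abs_of_pos hlam0, abs_of_pos hα, hx]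
    norm_num
  have habsB : |(-2) * (lam * (k.2 : ℝ))| = 2 * (lam * y) := by
    rw [abs_mul, abs_mul, abs_of_pos hlam0, hy]
    norm_num
  rcases lt_or_ge 0 s with hspos | hsneg
  · -- s > 0 : |s| = s
    have h2eq : (2:ℝ) = lam * (α * (k.1 : ℝ) + (k.2 : ℝ)) := by
      rw [← hs, ← abs_of_pos hspos, hlams]
    have e1 : α * lam * (k.1 : ℝ) - lam * (k.2 : ℝ) + 2 = 2 * (lam * (α * (k.1 : ℝ))) := by
      linear_combination h2eq
    have e2 : α * lam * (k.1 : ℝ) - lam * (k.2 : ℝ) - 2 = (-2) * (lam * (k.2 : ℝ)) := by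
      linear_combination -h2eq
    constructor
    · rw [e1, habsA]; exact hmain.trans hA
    · rw [e2, habsB]; exact hmain.trans hB
  · -- s < 0 : |s| = -s
    have hsneg' : s < 0 := hsneg.lt_of_ne hkres
    have h2eq : (2:ℝ) = lam * (-(α * (k.1 : ℝ) + (k.2 : ℝ))) := by
      rw [← hs, ← abs_of_neg hsneg', hlams]
    have e1 : α * lam * (k.1 : ℝ) - lam * (k.2 : ℝ) + 2 = (-2) * (lam * (k.2 : ℝ)) := by
      linear_combination h2eq
    have e2 : α * lam * (k.1 : ℝ) - lam * (k.2 : ℝ) - 2 = 2 * (lam * (α * (k.1 : ℝ))) := by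
      linear_combination -h2eq
    constructor
    · rw [e1, habsB]; exact hmain.trans hB
    · rw [e2, habsA]; exact hmain.trans hA
end

section
/- Let X be a complex Hilbert space, M ≥ 0, Q : ℝ → B(X) continuous with ‖Q(s)‖_op ≤ M for all s, and let ξ : ℝ → X be differentiable with i ξ'(s) = Q(s) ξ(s) and ‖ξ(s)‖ ≤ 1 for all s. Then for every B ∈ B(X), every ω ∈ ℝ∖{0}, and every t ∈ ℝ, one has ‖∫₀ᵗ cos(ω s) B ξ(s) ds‖ ≤ (‖B‖_op/|ω|)(1 + M|t|), and the same bound holds with cos(ω s) replaced by sin(ω s) up to an extra additive term ‖B‖_op/|ω| (i.e. ‖∫₀ᵗ sin(ω s) B ξ(s) ds‖ ≤ (‖B‖_op/|ω|)(2 + M|t|)). -/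
/-!
Integrate by parts against a bounded antiderivative of the oscillating factor: `sin (ω s) / ω`
for the cosine and `-cos (ω s) / ω` for the sine, both bounded by `1 / |ω|`. Each boundary term
costs at most `‖B‖ / |ω|` (the one at `s = 0` vanishes for `sin`), and the remaining integrand
involves `(B ξ)' = -i B Q ξ`, of norm at most `‖B‖ M`, so it contributes `‖B‖ M |t| / |ω|`.
-/

open intervalIntegral

theorem norm_integral_smul_le_of_hasDerivAt {E : Type*} [NormedAddCommGroup E] [NormedSpace ℝ E]
    [CompleteSpace E] {A a : ℝ → ℝ} {f f' : ℝ → E} {b c C K L : ℝ}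
    (hA : ∀ s, HasDerivAt A (a s) s) (ha : Continuous a)
    (hf : ∀ s, HasDerivAt f (f' s) s) (hf' : Continuous f')
    (hAC : ∀ s, |A s| ≤ C) (hfK : ∀ s, ‖f s‖ ≤ K) (hf'L : ∀ s, ‖f' s‖ ≤ L) :
    ‖∫ s in b..c, a s • f s‖ ≤ (|A b| + |A c|) * K + C * L * |c - b| := by
  have hparts : ∫ s in b..c, a s • f s = (A c • f c - A b • f b) - ∫ s in b..c, A s • f' s := by
    rw [integral_smul_deriv_eq_deriv_smul (fun s _ => hA s) (fun s _ => hf s)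
      (ha.intervalIntegrable b c) (hf'.intervalIntegrable b c)]
    abel
  have hrem : ‖∫ s in b..c, A s • f' s‖ ≤ C * L * |c - b| :=
    norm_integral_le_of_norm_le_const fun s _ => by
      rw [norm_smul, Real.norm_eq_abs]
      exact mul_le_mul (hAC s) (hf'L s) (norm_nonneg _) ((abs_nonneg _).trans (hAC s))
  have hbdry : ∀ s, ‖A s • f s‖ ≤ |A s| * K := fun s => by
    rw [norm_smul, Real.norm_eq_abs]
    exact mul_le_mul_of_nonneg_left (hfK s) (abs_nonneg _)
  calc ‖∫ s in b..c, a s • f s‖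
      ≤ ‖A c • f c‖ + ‖A b • f b‖ + ‖∫ s in b..c, A s • f' s‖ := by
        rw [hparts]; exact (norm_sub_le _ _).trans (by gcongr; exact norm_sub_le _ _)
    _ ≤ (|A b| + |A c|) * K + C * L * |c - b| := by
        linarith [hbdry b, hbdry c]

theorem norm_integral_smul_apply_le_of_schrodinger {X : Type*} [NormedAddCommGroup X]
    [NormedSpace ℂ X] [CompleteSpace X] {M : ℝ} {Q : ℝ → X →L[ℂ] X} (hQc : Continuous Q)
    (hQM : ∀ s, ‖Q s‖ ≤ M) {ξ : ℝ → X} (hξ : ∀ s, HasDerivAt ξ ((-Complex.I) • Q s (ξ s)) s)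
    (hξ1 : ∀ s, ‖ξ s‖ ≤ 1) (B : X →L[ℂ] X) {A a : ℝ → ℝ} (hA : ∀ s, HasDerivAt A (a s) s)
    (ha : Continuous a) {C : ℝ} (hAC : ∀ s, |A s| ≤ C) (t : ℝ) :
    ‖∫ s in (0:ℝ)..t, a s • B (ξ s)‖ ≤ (|A 0| + |A t|) * ‖B‖ + C * (‖B‖ * M) * |t| := by
  have hξc : Continuous ξ := continuous_iff_continuousAt.2 fun s => (hξ s).continuousAt
  have hBξ : ∀ s, HasDerivAt (fun s => B (ξ s)) (B ((-Complex.I) • Q s (ξ s))) s := fun s =>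
    (B.restrictScalars ℝ).hasFDerivAt.comp_hasDerivAt s (hξ s)
  have hBξ' : ∀ s, ‖B ((-Complex.I) • Q s (ξ s))‖ ≤ ‖B‖ * M := fun s => by
    refine B.le_opNorm_of_le ?_
    rw [norm_smul, norm_neg, Complex.norm_I, one_mul]
    exact ((Q s).le_opNorm_of_le (hξ1 s)).trans ((mul_one _).trans_le (hQM s))
  simpa only [sub_zero] using norm_integral_smul_le_of_hasDerivAt (b := 0) (c := t) hA ha hBξ
    (by fun_prop) hAC (fun s => B.le_opNorm_of_le (hξ1 s) |>.trans_eq (mul_one _)) hBξ'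

theorem hasDerivAt_sin_mul_div {ω : ℝ} (hω : ω ≠ 0) (s : ℝ) :
    HasDerivAt (fun s => Real.sin (ω * s) / ω) (Real.cos (ω * s)) s := by
  simpa [mul_div_assoc, hω] using ((hasDerivAt_id s).const_mul ω).sin.div_const ω

theorem hasDerivAt_neg_cos_mul_div {ω : ℝ} (hω : ω ≠ 0) (s : ℝ) :
    HasDerivAt (fun s => -Real.cos (ω * s) / ω) (Real.sin (ω * s)) s := by
  simpa [mul_div_assoc, hω] using ((hasDerivAt_id s).const_mul ω).cos.neg.div_const ω

theorem abs_div_le_one_div_abs {x : ℝ} (hx : |x| ≤ 1) (ω : ℝ) : |x / ω| ≤ 1 / |ω| := by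
  rw [abs_div]; gcongr

theorem stmt11_general {X : Type*} [NormedAddCommGroup X] [InnerProductSpace ℂ X] [CompleteSpace X]
    (M : ℝ)
    (Q : ℝ → (X →L[ℂ] X)) (hQc : Continuous Q) (hQM : ∀ s, ‖Q s‖ ≤ M)
    (ξ : ℝ → X) (hξ : ∀ s, HasDerivAt ξ ((-Complex.I) • (Q s (ξ s))) s)
    (hξ1 : ∀ s, ‖ξ s‖ ≤ 1)
    (B : X →L[ℂ] X) (ω : ℝ) (hω : ω ≠ 0) (t : ℝ) :
    ‖∫ s in (0:ℝ)..t, Real.cos (ω * s) • B (ξ s)‖ ≤ ‖B‖ / |ω| * (1 + M * |t|) ∧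
    ‖∫ s in (0:ℝ)..t, Real.sin (ω * s) • B (ξ s)‖ ≤ ‖B‖ / |ω| * (2 + M * |t|) := by
  have hsin : ∀ s, |Real.sin (ω * s) / ω| ≤ 1 / |ω| := fun s =>
    abs_div_le_one_div_abs (Real.abs_sin_le_one _) ω
  have hcos : ∀ s, |-Real.cos (ω * s) / ω| ≤ 1 / |ω| := fun s =>
    abs_div_le_one_div_abs ((abs_neg _).trans_le (Real.abs_cos_le_one _)) ω
  constructor
  · calc _ ≤ (|Real.sin (ω * 0) / ω| + |Real.sin (ω * t) / ω|) * ‖B‖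
            + 1 / |ω| * (‖B‖ * M) * |t| :=
          norm_integral_smul_apply_le_of_schrodinger hQc hQM hξ hξ1 B (hasDerivAt_sin_mul_div hω)
            (by fun_prop) hsin t
      _ ≤ (0 + 1 / |ω|) * ‖B‖ + 1 / |ω| * (‖B‖ * M) * |t| := by
          gcongr
          · simp
          · exact hsin t
      _ = ‖B‖ / |ω| * (1 + M * |t|) := by ring
  · calc _ ≤ (|-Real.cos (ω * 0) / ω| + |-Real.cos (ω * t) / ω|) * ‖B‖
            + 1 / |ω| * (‖B‖ * M) * |t| :=
          norm_integral_smul_apply_le_of_schrodinger hQc hQM hξ hξ1 B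
            (hasDerivAt_neg_cos_mul_div hω) (by fun_prop) hcos t
      _ ≤ (1 / |ω| + 1 / |ω|) * ‖B‖ + 1 / |ω| * (‖B‖ * M) * |t| := by gcongr <;> apply hcos
      _ = ‖B‖ / |ω| * (2 + M * |t|) := by ring

/-- Oscillatory-integral estimates along a slow quantum evolution: if
`iξ' = Qξ` with `‖Q(s)‖ ≤ M` and `‖ξ(s)‖ ≤ 1`, then for any bounded operator `B` and `ω ≠ 0`,
`‖∫₀ᵗ cos(ωs) B ξ(s) ds‖ ≤ (‖B‖/|ω|)(1 + M|t|)` and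
`‖∫₀ᵗ sin(ωs) B ξ(s) ds‖ ≤ (‖B‖/|ω|)(2 + M|t|)`. -/
theorem stmt11 {X : Type*} [NormedAddCommGroup X] [InnerProductSpace ℂ X] [CompleteSpace X]
    (M : ℝ) (hM : 0 ≤ M)
    (Q : ℝ → (X →L[ℂ] X)) (hQc : Continuous Q) (hQM : ∀ s, ‖Q s‖ ≤ M)
    (ξ : ℝ → X) (hξ : ∀ s, HasDerivAt ξ ((-Complex.I) • (Q s (ξ s))) s)
    (hξ1 : ∀ s, ‖ξ s‖ ≤ 1)
    (B : X →L[ℂ] X) (ω : ℝ) (hω : ω ≠ 0) (t : ℝ) :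
    ‖∫ s in (0:ℝ)..t, Real.cos (ω * s) • B (ξ s)‖ ≤ ‖B‖ / |ω| * (1 + M * |t|) ∧
    ‖∫ s in (0:ℝ)..t, Real.sin (ω * s) • B (ξ s)‖ ≤ ‖B‖ / |ω| * (2 + M * |t|) :=
  stmt11_general M Q hQc hQM ξ hξ hξ1 B ω hω t
end

section
/- Let p ∈ ℕ and k = (k⁽¹⁾, k⁽²⁾) ∈ ℤ²∖{0}, and define V : 𝕋² → M₂(ℂ) by V(φ) = (2/|k|^p) cos(k⁽¹⁾φ₁) cos(k⁽²⁾φ₂) σ⁽¹⁾. Then ‖V‖_{C^p} = 2 (max{|k⁽¹⁾|, |k⁽²⁾|})^p / |k|^p, and in particular 2^{1−p} ≤ ‖V‖_{C^p} ≤ 2. -/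
open Real

noncomputable section

/-- Partial derivative in the coordinate direction `j`. -/
def pderiv1 {n : ℕ} {E : Type*} [NormedAddCommGroup E] [NormedSpace ℝ E]
    (j : Fin n) (f : (Fin n → ℝ) → E) : (Fin n → ℝ) → E :=
  fun x => fderiv ℝ f x (Pi.single j 1)

/-- Iterated partial derivative along a list of coordinate directions. -/
def listPDeriv {n : ℕ} {E : Type*} [NormedAddCommGroup E] [NormedSpace ℝ E]
    (f : (Fin n → ℝ) → E) : List (Fin n) → ((Fin n → ℝ) → E)
  | [] => f
  | j :: js => pderiv1 j (listPDeriv f js)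

/-- The `C^p` norm: sup over all iterated partial derivatives of order `≤ p` of the sup norm. -/
def CpNorm {n : ℕ} {E : Type*} [NormedAddCommGroup E] [NormedSpace ℝ E]
    (p : ℕ) (f : (Fin n → ℝ) → E) : ℝ :=
  sSup {r : ℝ | ∃ (ms : List (Fin n)) (x : Fin n → ℝ), ms.length ≤ p ∧ r = ‖listPDeriv f ms x‖}

/-- The first Pauli matrix, as a continuous linear operator on `ℂ²` (so that the norm is the
operator norm). -/
def pauli1CLM : EuclideanSpace ℂ (Fin 2) →L[ℂ] EuclideanSpace ℂ (Fin 2) :=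
  Matrix.toEuclideanCLM (𝕜 := ℂ) !![0, 1; 1, 0]

/-!
Differentiating `φ ↦ cos (k₁ φ₀) cos (k₂ φ₁) • T` along a word with `a` letters `0` and `b`
letters `1` gives `φ ↦ f₁ (φ₀) f₂ (φ₁) • T`, where `f₁`, `f₂` are the `a`-th and `b`-th
derivatives of `t ↦ cos (k₁ t)`, `t ↦ cos (k₂ t)`: phase-shifted cosines of amplitudes `|k₁|^a`,
`|k₂|^b`. Hence the `C^p` norm is `max (|k₁|, |k₂|)^p ‖T‖`, attained by differentiating `p` times
in the dominant direction. Since `σ⁽¹⁾` only swaps coordinates, its norm is `1`, and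
`max |k| ≤ |k| ≤ 2 max |k|` gives the bounds.
-/

noncomputable def cosDeriv (k : ℝ) (a : ℕ) (t : ℝ) : ℝ := k ^ a * cos (k * t + a * (π / 2))

theorem cosDeriv_zero (k t : ℝ) : cosDeriv k 0 t = cos (k * t) := by
  simp [cosDeriv]

theorem hasDerivAt_cosDeriv (k : ℝ) (a : ℕ) (t : ℝ) :
    HasDerivAt (cosDeriv k a) (cosDeriv k (a + 1) t) t := by
  have hphase : HasDerivAt (fun t : ℝ => k * t + a * (π / 2)) k t := by
    simpa using ((hasDerivAt_id t).const_mul k).add_const ((a : ℝ) * (π / 2))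
  refine (hphase.cos.const_mul (k ^ a)).congr_deriv ?_
  rw [cosDeriv, Nat.cast_succ, add_one_mul, ← add_assoc, cos_add_pi_div_two]
  ring

theorem abs_cosDeriv_le (k : ℝ) (a : ℕ) (t : ℝ) : |cosDeriv k a t| ≤ |k| ^ a := by
  rw [cosDeriv, abs_mul, abs_pow]
  exact mul_le_of_le_one_right (by positivity) (abs_cos_le_one _)

theorem exists_abs_cosDeriv_eq (k : ℝ) (a : ℕ) : ∃ t, |cosDeriv k a t| = |k| ^ a := by
  rcases eq_or_ne k 0 with rfl | hk
  · exact ⟨0, by cases a <;> simp [cosDeriv]⟩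
  · refine ⟨-(a * (π / 2)) / k, ?_⟩
    rw [cosDeriv, mul_div_cancel₀ _ hk, neg_add_cancel, cos_zero, mul_one, abs_pow]

section Tower

variable {E : Type*} [NormedAddCommGroup E] [NormedSpace ℝ E] {f g : ℕ → ℝ → ℝ}

theorem pderiv1_tower_smul (hf : ∀ a t, HasDerivAt (f a) (f (a + 1) t) t)
    (hg : ∀ a t, HasDerivAt (g a) (g (a + 1) t) t) (T : E) (a b : ℕ) (j : Fin 2) :
    pderiv1 j (fun x : Fin 2 → ℝ => (f a (x 0) * g b (x 1)) • T) = fun x =>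
      (f (a + if j = 0 then 1 else 0) (x 0) * g (b + if j = 1 then 1 else 0) (x 1)) • T := by
  funext x
  have hF : HasFDerivAt (fun x : Fin 2 → ℝ => (f a (x 0) * g b (x 1)) • T) _ x :=
    (((hf a (x 0)).comp_hasFDerivAt x (hasFDerivAt_apply (𝕜 := ℝ) 0 x)).mul
      ((hg b (x 1)).comp_hasFDerivAt x (hasFDerivAt_apply (𝕜 := ℝ) 1 x))).smul_const T
  rw [pderiv1, hF.fderiv]
  fin_cases j <;> simp [mul_comm]

theorem listPDeriv_tower_smul (hf : ∀ a t, HasDerivAt (f a) (f (a + 1) t) t)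
    (hg : ∀ a t, HasDerivAt (g a) (g (a + 1) t) t) (T : E) (ms : List (Fin 2)) :
    listPDeriv (fun x : Fin 2 → ℝ => (f 0 (x 0) * g 0 (x 1)) • T) ms =
      fun x => (f (ms.count 0) (x 0) * g (ms.count 1) (x 1)) • T := by
  induction ms with
  | nil => rfl
  | cons j js ih =>
    rw [listPDeriv, ih, pderiv1_tower_smul hf hg]
    fin_cases j <;> simp

end Tower

theorem count_zero_add_count_one_eq_length (ms : List (Fin 2)) :
    ms.count 0 + ms.count 1 = ms.length := by
  induction ms with
  | nil => rfl
  | cons j js ih => fin_cases j <;> simp <;> omega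

theorem CpNorm_eq_of_isGreatest {n : ℕ} {E : Type*} [NormedAddCommGroup E] [NormedSpace ℝ E]
    {p : ℕ} {F : (Fin n → ℝ) → E} {B : ℝ}
    (h : IsGreatest {r : ℝ | ∃ (ms : List (Fin n)) (x : Fin n → ℝ),
      ms.length ≤ p ∧ r = ‖listPDeriv F ms x‖} B) : CpNorm p F = B :=
  h.csSup_eq

theorem CpNorm_cos_mul_cos_smul {E : Type*} [NormedAddCommGroup E] [NormedSpace ℝ E]
    (p : ℕ) {k₁ k₂ : ℝ} (hk : 1 ≤ max |k₁| |k₂|) (T : E) :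
    CpNorm p (fun x : Fin 2 → ℝ => (cos (k₁ * x 0) * cos (k₂ * x 1)) • T) =
      max |k₁| |k₂| ^ p * ‖T‖ := by
  set M := max |k₁| |k₂|
  have hnorm (ms : List (Fin 2)) (x : Fin 2 → ℝ) :
      ‖listPDeriv (fun x : Fin 2 → ℝ => (cos (k₁ * x 0) * cos (k₂ * x 1)) • T) ms x‖ =
        |cosDeriv k₁ (ms.count 0) (x 0)| * |cosDeriv k₂ (ms.count 1) (x 1)| * ‖T‖ := by
    simp_rw [← cosDeriv_zero]
    rw [listPDeriv_tower_smul (hasDerivAt_cosDeriv k₁) (hasDerivAt_cosDeriv k₂),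
      norm_smul, Real.norm_eq_abs, abs_mul]
  have hmem (a b : ℕ) (hab : a + b ≤ p) : ∃ (ms : List (Fin 2)) (x : Fin 2 → ℝ),
      ms.length ≤ p ∧ |k₁| ^ a * |k₂| ^ b * ‖T‖ =
        ‖listPDeriv (fun x : Fin 2 → ℝ => (cos (k₁ * x 0) * cos (k₂ * x 1)) • T) ms x‖ := by
    obtain ⟨t₁, ht₁⟩ := exists_abs_cosDeriv_eq k₁ a
    obtain ⟨t₂, ht₂⟩ := exists_abs_cosDeriv_eq k₂ b
    refine ⟨List.replicate a 0 ++ List.replicate b 1, ![t₁, t₂], by simpa using hab, ?_⟩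
    rw [hnorm]
    simp [List.count_replicate, ht₁, ht₂]
  refine CpNorm_eq_of_isGreatest ⟨?_, ?_⟩
  · rcases max_choice |k₁| |k₂| with h | h
    · simpa [M, h] using hmem p 0 le_rfl
    · simpa [M, h] using hmem 0 p (Nat.zero_add p).le
  · rintro r ⟨ms, x, hlen, rfl⟩
    have hcount := count_zero_add_count_one_eq_length ms
    calc ‖listPDeriv _ ms x‖
        = |cosDeriv k₁ (ms.count 0) (x 0)| * |cosDeriv k₂ (ms.count 1) (x 1)| * ‖T‖ := hnorm ms x
      _ ≤ M ^ ms.count 0 * M ^ ms.count 1 * ‖T‖ := by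
          gcongr
          · exact (abs_cosDeriv_le _ _ _).trans (by gcongr; exact le_max_left _ _)
          · exact (abs_cosDeriv_le _ _ _).trans (by gcongr; exact le_max_right _ _)
      _ ≤ M ^ p * ‖T‖ := by
          rw [← pow_add]
          gcongr
          omega

theorem norm_pauli1CLM_apply (x : EuclideanSpace ℂ (Fin 2)) : ‖pauli1CLM x‖ = ‖x‖ := by
  have hswap : pauli1CLM x = WithLp.toLp 2 ![x 1, x 0] := by
    ext i
    fin_cases i <;> simp [pauli1CLM, Matrix.ofLp_toEuclideanCLM, Matrix.mulVec, dotProduct]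
  rw [hswap, EuclideanSpace.norm_eq, EuclideanSpace.norm_eq, Fin.sum_univ_two, Fin.sum_univ_two]
  simp [add_comm]

theorem norm_pauli1CLM : ‖pauli1CLM‖ = 1 := by
  refine le_antisymm (pauli1CLM.opNorm_le_bound zero_le_one fun x => by
    rw [norm_pauli1CLM_apply, one_mul]) ?_
  simpa [norm_pauli1CLM_apply] using pauli1CLM.le_opNorm (EuclideanSpace.single 0 1)

theorem two_zpow_one_sub_le_two_mul_pow {r : ℝ} (hr : 1 / 2 ≤ r) (p : ℕ) :
    (2 : ℝ) ^ ((1 : ℤ) - p) ≤ 2 * r ^ p := by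
  rw [zpow_sub₀ two_ne_zero, zpow_one, zpow_natCast, div_eq_mul_inv, ← inv_pow, ← one_div]
  gcongr

theorem one_le_max_abs_of_ne_zero {k : ℤ × ℤ} (hk : k ≠ 0) :
    1 ≤ max (|k.1| : ℝ) (|k.2| : ℝ) := by
  have hne : k.1 ≠ 0 ∨ k.2 ≠ 0 := by
    contrapose! hk
    exact Prod.ext hk.1 hk.2
  rcases hne with h | h
  · exact le_max_of_le_left (by exact_mod_cast Int.one_le_abs h)
  · exact le_max_of_le_right (by exact_mod_cast Int.one_le_abs h)

/-- The `C^p` norm of `V(φ) = (2/|k|^p) cos(k⁽¹⁾φ₁) cos(k⁽²⁾φ₂) σ⁽¹⁾` equals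
`2 (max{|k⁽¹⁾|,|k⁽²⁾|})^p / |k|^p`, and in particular lies in `[2^{1-p}, 2]`. -/
theorem stmt12 (p : ℕ) (k : ℤ × ℤ) (hk : k ≠ 0)
    (V : (Fin 2 → ℝ) → (EuclideanSpace ℂ (Fin 2) →L[ℂ] EuclideanSpace ℂ (Fin 2)))
    (hV : ∀ φ : Fin 2 → ℝ, V φ =
      ((2 / ((|k.1| : ℝ) + (|k.2| : ℝ)) ^ p * Real.cos ((k.1 : ℝ) * φ 0) *
          Real.cos ((k.2 : ℝ) * φ 1) : ℝ) : ℂ) • pauli1CLM) :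
    CpNorm p V = 2 * (max (|k.1| : ℝ) (|k.2| : ℝ)) ^ p / ((|k.1| : ℝ) + (|k.2| : ℝ)) ^ p ∧
    (2 : ℝ) ^ ((1 : ℤ) - (p : ℤ)) ≤ CpNorm p V ∧ CpNorm p V ≤ 2 := by
  set M : ℝ := max |(k.1 : ℝ)| |(k.2 : ℝ)|
  set s : ℝ := |(k.1 : ℝ)| + |(k.2 : ℝ)|
  have hM : 1 ≤ M := one_le_max_abs_of_ne_zero hk
  have hMs : M ≤ s :=
    max_le (le_add_of_nonneg_right (abs_nonneg _)) (le_add_of_nonneg_left (abs_nonneg _))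
  have hsM : s ≤ 2 * M := by rw [two_mul]; exact add_le_add (le_max_left _ _) (le_max_right _ _)
  have hs : 0 < s := by linarith
  have hV' : V = fun φ : Fin 2 → ℝ =>
      (cos ((k.1 : ℝ) * φ 0) * cos ((k.2 : ℝ) * φ 1)) • ((2 / s ^ p) • pauli1CLM) := by
    funext φ
    rw [hV φ, smul_smul, mul_comm (cos _ * cos _), ← mul_assoc]
    exact Complex.coe_smul _ pauli1CLM
  have hCp : CpNorm p V = 2 * (M / s) ^ p := by
    rw [hV', CpNorm_cos_mul_cos_smul p hM, norm_smul, norm_pauli1CLM, Real.norm_eq_abs,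
      abs_of_pos (show 0 < 2 / s ^ p by positivity)]
    ring
  refine ⟨by rw [hCp]; ring, ?_, ?_⟩
  · rw [hCp]
    exact two_zpow_one_sub_le_two_mul_pow (by rw [le_div_iff₀ hs]; linarith) p
  · rw [hCp]
    have : (M / s) ^ p ≤ 1 := pow_le_one₀ (by positivity) ((div_le_one hs).2 hMs)
    linarith
end
end
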